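/- arXiv:2301.03776 — 2 statements merged into one kernel-verified Lean document; each statement's English description precedes it below -/
import Mathlib

section
/- Let M be a round matroid. Then the tree-width of M equals r(M). -/
open Set

namespace Matroid

variable {α : Type*} {β : Type*}

/-- The rank of a set in a matroid: the supremum of sizes of independent subsets. -/
noncomputable def mRank (M : Matroid α) (X : Set α) : ℕ :=
  sSup {n : ℕ | ∃ I, M.Indep I ∧ I ⊆ X ∧ I.ncard = n}

/-- The rank of a matroid. -/
noncomputable def mRk (M : Matroid α) : ℕ := M.mRank M.E

/-- A flat `F` is modular if `r F + r F' = r (F ∪ F') + r (F ∩ F')` for every flat `F'`. -/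
def IsModularFlat (M : Matroid α) (F : Set α) : Prop :=
  M.IsFlat F ∧ ∀ F', M.IsFlat F' →
    M.mRank F + M.mRank F' = M.mRank (F ∪ F') + M.mRank (F ∩ F')

/-- A proper flat is a flat other than the ground set. -/
def IsProperFlat (M : Matroid α) (F : Set α) : Prop := M.IsFlat F ∧ F ≠ M.E

/-- A vertical cover is a pair of proper flats whose union is the ground set. -/
def VerticalCover (M : Matroid α) (F F' : Set α) : Prop :=
  M.IsProperFlat F ∧ M.IsProperFlat F' ∧ F ∪ F' = M.E

/-- A modular cover is a vertical cover by two modular flats. -/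
def ModularCover (M : Matroid α) (F F' : Set α) : Prop :=
  M.VerticalCover F F' ∧ M.IsModularFlat F ∧ M.IsModularFlat F'

/-- A matroid is round if it has no vertical cover. -/
def Round (M : Matroid α) : Prop := ∀ F F', ¬ M.VerticalCover F F'

/-- A subset of the ground set is round if the restriction to it is round. -/
def RoundSet (M : Matroid α) (X : Set α) : Prop := X ⊆ M.E ∧ (M ↾ X).Round

/-- A rotunda is a maximal round flat. -/
def Rotunda (M : Matroid α) (R : Set α) : Prop :=
  M.IsFlat R ∧ M.RoundSet R ∧ ∀ R', M.IsFlat R' → M.RoundSet R' → R ⊆ R' → R' = R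

/-- A matroid of rank `r` is supersolvable if there is a chain of modular flats
`F 0 ⊆ F 1 ⊆ ⋯ ⊆ F r` with `r (F i) = i` for each `i`. -/
def Supersolvable (M : Matroid α) : Prop :=
  ∃ F : ℕ → Set α, (∀ i ≤ M.mRk, M.IsModularFlat (F i) ∧ M.mRank (F i) = i) ∧
    ∀ i < M.mRk, F i ⊆ F (i + 1)

/-- A matroid is saturated if every round flat is modular. -/
def Saturated (M : Matroid α) : Prop :=
  ∀ F, M.IsFlat F → M.RoundSet F → M.IsModularFlat F

/-- A circuit: a minimal dependent subset of the ground set. -/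
def Circ (M : Matroid α) (C : Set α) : Prop :=
  C ⊆ M.E ∧ ¬ M.Indep C ∧ ∀ D ⊂ C, M.Indep D

/-- A matroid is connected if it is non-empty and every two distinct elements lie in a
common circuit. -/
def ConnectedM (M : Matroid α) : Prop :=
  M.E.Nonempty ∧ ∀ x ∈ M.E, ∀ y ∈ M.E, x = y ∨ ∃ C, M.Circ C ∧ x ∈ C ∧ y ∈ C

/-- A hyperplane: a flat of rank `r M - 1`. -/
def IsHyperplane (M : Matroid α) (H : Set α) : Prop :=
  M.IsFlat H ∧ M.mRank H + 1 = M.mRk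

/-- The union of the projections `P_H(x, y) = H ∩ cl (x ∪ y)` onto the modular hyperplane `H`,
taken over all pairs of distinct rank-one flats `x = cl {a}`, `y = cl {b}` spanned by
elements `a, b` of `X`. -/
def projUnion (M : Matroid α) (H X : Set α) : Set α :=
  ⋃ a ∈ X, ⋃ b ∈ X, ⋃ (_ : M.closure {a} ≠ M.closure {b}), H ∩ M.closure {a, b}

/-- Two elements are related if they are equal or lie in a common circuit; the connected
components of a matroid are the restrictions to the equivalence classes of this relation. -/
def connRel (M : Matroid α) (x y : α) : Prop :=
  x = y ∨ ∃ C, M.Circ C ∧ x ∈ C ∧ y ∈ C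

/-- The rotunda graph of a matroid: vertices are the rotunda; two rotunda are adjacent if
they intersect and there is a modular cover separating them at their intersection. -/
def rotundaGraph (M : Matroid α) : SimpleGraph {R : Set α // M.Rotunda R} where
  Adj R₁ R₂ := R₁ ≠ R₂ ∧ (R₁.1 ∩ R₂.1).Nonempty ∧
    ∃ F₁ F₂, M.ModularCover F₁ F₂ ∧ R₁.1 ⊆ F₁ ∧ R₂.1 ⊆ F₂ ∧ F₁ ∩ F₂ = R₁.1 ∩ R₂.1
  symm := by
    constructor
    rintro a b ⟨hne, hint, F₁, F₂, ⟨⟨hp1, hp2, hu⟩, hm1, hm2⟩, h1, h2, hi⟩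
    refine ⟨hne.symm, by rwa [Set.inter_comm], F₂, F₁,
      ⟨⟨hp2, hp1, by rwa [Set.union_comm]⟩, hm2, hm1⟩, h2, h1, ?_⟩
    rw [Set.inter_comm, hi, Set.inter_comm]
  loopless := ⟨fun a h => h.1 rfl⟩

/-- A rotunda tree of `M`: a tree on the rotunda of `M` such that for each element `x` of the
ground set, the rotunda containing `x` induce a (nonempty) subtree. -/
def IsRotundaTree (M : Matroid α) (T : SimpleGraph {R : Set α // M.Rotunda R}) : Prop :=
  T.IsTree ∧ ∀ x ∈ M.E, (T.induce {t : {R : Set α // M.Rotunda R} | x ∈ t.1}).Connected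

/-- A legitimate weighting of `M`: zero on the empty set, and strictly monotone under proper
inclusion on the set consisting of `∅` and the pairwise intersections of distinct rotunda. -/
def LegitimateWeighting (M : Matroid α) (σ : Set α → ℕ) : Prop :=
  σ ∅ = 0 ∧
  ∀ X X' : Set α,
    (X = ∅ ∨ ∃ R R', M.Rotunda R ∧ M.Rotunda R' ∧ R ≠ R' ∧ X = R ∩ R') →
    (X' = ∅ ∨ ∃ R R', M.Rotunda R ∧ M.Rotunda R' ∧ R ≠ R' ∧ X' = R ∩ R') →
    X ⊂ X' → σ X < σ X'

/-- The total weight of a graph on the rotunda of `M`, where the edge joining rotunda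
`R` and `R'` gets weight `σ (R ∩ R')`. -/
noncomputable def treeWeight {M : Matroid α} (σ : Set α → ℕ)
    (T : SimpleGraph {R : Set α // M.Rotunda R}) : ℕ :=
  ∑ᶠ e ∈ T.edgeSet,
    Sym2.lift ⟨fun a b => σ (a.1 ∩ b.1), fun a b => by simp [Set.inter_comm]⟩ e

/-- A tree-decomposition of a matroid: a tree together with bags covering the ground set. -/
def IsTreeDecomp (M : Matroid α) (T : SimpleGraph β) (τ : β → Set α) : Prop :=
  T.IsTree ∧ ∀ x ∈ M.E, ∃ t, x ∈ τ t

/-- The node-width of a node `t` in a tree-decomposition `(T, τ)` of `M`: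
`(Σ_i r (τ t ∪ ⋃_{k ≠ i} F_k)) − (d − 1) · r M`, where `F_1, …, F_d` are the unions of the
bags over the connected components of `T − t`. -/
noncomputable def nodeWidth (M : Matroid α) (T : SimpleGraph β) (τ : β → Set α) (t : β) : ℤ :=
  (∑ᶠ c : (T.induce {s : β | s ≠ t}).ConnectedComponent,
      (M.mRank (τ t ∪ ⋃ (s : {s : β // s ≠ t})
        (_ : (T.induce {s : β | s ≠ t}).connectedComponentMk s ≠ c), τ s.1) : ℤ))
    - ((Nat.card (T.induce {s : β | s ≠ t}).ConnectedComponent : ℤ) - 1) * (M.mRk : ℤ)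

/-- The width of a tree-decomposition: the maximum node-width. -/
noncomputable def decompWidth (M : Matroid α) (T : SimpleGraph β) (τ : β → Set α) : ℤ :=
  sSup (Set.range (M.nodeWidth T τ))

/-- The tree-width of a matroid: the minimum width of a (finite) tree-decomposition. -/
noncomputable def treeWidth (M : Matroid α) : ℕ :=
  sInf {n : ℕ | ∃ (β : Type) (T : SimpleGraph β) (τ : β → Set α),
    Finite β ∧ M.IsTreeDecomp T τ ∧ ∀ t, M.nodeWidth T τ t ≤ (n : ℤ)}

end Matroid

namespace SimpleGraph

/-- A graph is chordal if every cycle with at least four edges has a chord: an edge of the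
graph joining two vertices of the cycle that is not an edge of the cycle. -/
def IsChordal {V : Type*} (G : SimpleGraph V) : Prop :=
  ∀ ⦃v : V⦄ (w : G.Walk v v), w.IsCycle → 4 ≤ w.length →
    ∃ x y, x ∈ w.support ∧ y ∈ w.support ∧ G.Adj x y ∧ s(x, y) ∉ w.edges

/-- A maximal clique of a graph. -/
def MaxClique {V : Type*} (G : SimpleGraph V) (C : Set V) : Prop :=
  G.IsClique C ∧ ∀ D, G.IsClique D → C ⊆ D → D = C

/-- The reduced clique graph of a graph: vertices are the maximal cliques; two maximal
cliques are adjacent if they intersect and every walk from one side to the other passes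
through their intersection. -/
def reducedCliqueGraph {V : Type*} (G : SimpleGraph V) :
    SimpleGraph {C : Set V // G.MaxClique C} where
  Adj C₁ C₂ := C₁ ≠ C₂ ∧ (C₁.1 ∩ C₂.1).Nonempty ∧
    ∀ u ∈ C₁.1 \ C₂.1, ∀ v ∈ C₂.1 \ C₁.1, ∀ p : G.Walk u v,
      ∃ z ∈ p.support, z ∈ C₁.1 ∩ C₂.1
  symm := by
    constructor
    rintro a b ⟨hne, hint, hsep⟩
    refine ⟨hne.symm, by rwa [Set.inter_comm], fun u hu v hv p => ?_⟩
    obtain ⟨z, hz, hz2⟩ := hsep v hv u hu p.reverse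
    refine ⟨z, ?_, by rwa [Set.inter_comm]⟩
    simpa [SimpleGraph.Walk.support_reverse] using hz
  loopless := ⟨fun a h => h.1 rfl⟩

end SimpleGraph

/-!
A one-node decomposition has width `r(M)`. Conversely, suppose every node of a tree-decomposition
had width less than `r(M)`. At a node `t` the width is `r(M)` unless some component `c` of `T - t`
has `r(τ t ∪ ⋃_{k ≠ c} F_k) < r(M)`; choose such a `c` and the neighbour `f t` of `t` in it.
A finite tree has fewer edges than nodes, so some edge is chosen from both of its ends:
`f (f t) = t`. The two low-rank sets chosen at `t` and `f t` then cover `E(M)`, and their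
closures form a vertical cover, which a round matroid does not have.
-/

namespace Matroid

variable {α : Type*} {M : Matroid α} {I B X A : Set α}

lemma Indep.ncard_le_ncard_of_isBase [M.RankFinite] (hI : M.Indep I) (hB : M.IsBase B) :
    I.ncard ≤ B.ncard := by
  obtain ⟨B', hB', hIB'⟩ := hI.exists_isBase_superset
  exact (ncard_le_ncard hIB' hB'.finite).trans (hB'.ncard_eq_ncard_of_isBase hB).le

lemma mRank_le_ncard_of_isBase (X : Set α) [M.RankFinite] (hB : M.IsBase B) :
    M.mRank X ≤ B.ncard :=
  csSup_le ⟨0, ∅, M.empty_indep, empty_subset X, ncard_empty α⟩ <| by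
    rintro n ⟨I, hI, -, rfl⟩
    exact hI.ncard_le_ncard_of_isBase hB

lemma Indep.ncard_le_mRank [M.RankFinite] (hI : M.Indep I) (hIX : I ⊆ X) :
    I.ncard ≤ M.mRank X := by
  obtain ⟨B, hB⟩ := M.exists_isBase
  refine le_csSup ⟨B.ncard, ?_⟩ ⟨I, hI, hIX, rfl⟩
  rintro n ⟨J, hJ, -, rfl⟩
  exact hJ.ncard_le_ncard_of_isBase hB

lemma mRank_le_mRk (M : Matroid α) [M.RankFinite] (X : Set α) : M.mRank X ≤ M.mRk := by
  obtain ⟨B, hB⟩ := M.exists_isBase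
  exact (M.mRank_le_ncard_of_isBase X hB).trans (hB.indep.ncard_le_mRank hB.subset_ground)

lemma mRk_le_mRank_of_closure_eq [M.RankFinite] (h : M.closure X = M.E) :
    M.mRk ≤ M.mRank X := by
  obtain ⟨I, hI⟩ := M.exists_isBasis' X
  have hIB : M.IsBase I := hI.indep.isBase_of_spanning <| by
    rw [spanning_iff_closure_eq hI.indep.subset_ground, hI.closure_eq_closure, h]
  exact (M.mRank_le_ncard_of_isBase M.E hIB).trans (hIB.indep.ncard_le_mRank hI.subset)

lemma Round.closure_eq_ground_or (hM : M.Round) (hcov : M.E ⊆ A ∪ B) :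
    M.closure A = M.E ∨ M.closure B = M.E := by
  by_contra! h
  refine hM (M.closure A) (M.closure B)
    ⟨⟨M.isFlat_closure A, h.1⟩, ⟨M.isFlat_closure B, h.2⟩, ?_⟩
  refine (union_subset (M.closure_subset_ground A) (M.closure_subset_ground B)).antisymm
    fun x hx => ?_
  exact (hcov hx).imp (fun hA => M.inter_ground_subset_closure A ⟨hA, hx⟩)
    (fun hB => M.inter_ground_subset_closure B ⟨hB, hx⟩)

lemma Round.mRk_le_mRank_or [M.RankFinite] (hM : M.Round) (hcov : M.E ⊆ A ∪ B) :
    M.mRk ≤ M.mRank A ∨ M.mRk ≤ M.mRank B :=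
  (hM.closure_eq_ground_or hcov).imp mRk_le_mRank_of_closure_eq mRk_le_mRank_of_closure_eq

end Matroid

namespace SimpleGraph

variable {α β : Type*} {T : SimpleGraph β}

lemma Preconnected.exists_adj_connectedComponentMk_eq (hT : T.Preconnected) {t : β}
    (c : (T.induce {s | s ≠ t}).ConnectedComponent) :
    ∃ (n : β) (hn : n ≠ t), T.Adj t n ∧
      (T.induce {s | s ≠ t}).connectedComponentMk ⟨n, hn⟩ = c := by
  obtain ⟨⟨s, hs⟩, rfl⟩ := c.exists_rep
  obtain ⟨p, hp⟩ := (hT t s).exists_isPath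
  obtain ⟨n, hadj, q, rfl⟩ := Walk.exists_eq_cons_of_ne hs.symm p
  have htq : t ∉ q.support := (Walk.cons_isPath_iff _ _).1 hp |>.2
  have hq : {v | v ∈ q.support} ⊆ {s | s ≠ t} := fun v hv h => htq (h ▸ hv)
  refine ⟨n, hadj.ne.symm, hadj, ConnectedComponent.sound ?_⟩
  exact (q.connected_induce_support.preconnected ⟨n, q.start_mem_support⟩
    ⟨s, q.end_mem_support⟩).map (induceHomOfLE T hq).toHom

lemma Reachable.exists_walk_of_induce {s : Set β} {u v : s} (h : (T.induce s).Reachable u v) :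
    ∃ p : T.Walk u v, ∀ x ∉ s, x ∉ p.support := by
  obtain ⟨p⟩ := h
  refine ⟨p.map (Embedding.induce s).toHom, fun x hx hxp => ?_⟩
  obtain ⟨y, -, rfl⟩ := List.mem_map.1 ((Walk.support_map _ p).subst hxp :)
  exact hx y.2

/-- The edge `t t'` is a bridge, so no vertex reaches `t'` avoiding `t` and `t` avoiding `t'`. -/
lemma IsAcyclic.not_reachable_induce_of_reachable_induce (hT : T.IsAcyclic) {t t' u : β}
    (hadj : T.Adj t t') (hut : u ≠ t) (hut' : u ≠ t')
    (h : (T.induce {s | s ≠ t}).Reachable ⟨u, hut⟩ ⟨t', hadj.ne.symm⟩) :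
    ¬ (T.induce {s | s ≠ t'}).Reachable ⟨u, hut'⟩ ⟨t, hadj.ne⟩ := by
  intro h'
  obtain ⟨p, hp⟩ := h.exists_walk_of_induce
  obtain ⟨q, hq⟩ := h'.exists_walk_of_induce
  have hbridge := isBridge_iff_forall_walk_mem_edges.1
    (isAcyclic_iff_forall_adj_isBridge.1 hT hadj) (q.reverse.append p)
  rw [Walk.edges_append, Walk.edges_reverse, List.mem_append, List.mem_reverse] at hbridge
  exact hbridge.elim (fun he => hq t' (by simp) (Walk.snd_mem_support_of_mem_edges _ he))
    (fun he => hp t (by simp) (Walk.fst_mem_support_of_mem_edges _ he))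

/-- Counting edges: `v ↦ s(v, f v)` cannot be injective, since a finite tree has fewer edges
than vertices. -/
lemma IsTree.exists_map_map_eq [Finite β] (hT : T.IsTree) (f : β → β)
    (hf : ∀ v, T.Adj v (f v)) : ∃ v, f (f v) = v := by
  classical
  have := Fintype.ofFinite β
  have := Fintype.ofFinite T.edgeSet
  have hcard : Fintype.card T.edgeSet < Fintype.card β := by
    have := hT.card_edgeFinset
    rw [edgeFinset_card] at this
    omega
  obtain ⟨v, w, hvw, hsame⟩ := Fintype.exists_ne_map_eq_of_card_lt
    (fun v => (⟨s(v, f v), hf v⟩ : T.edgeSet)) hcard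
  rcases Sym2.eq_iff.1 (congrArg Subtype.val hsame) with ⟨hvw', -⟩ | ⟨hv, hw⟩
  · exact absurd hvw' hvw
  · exact ⟨v, by rw [hw, hv]⟩

/-- `τ t ∪ ⋃_{k ≠ c} F_k`, whose rank is the `c`-th summand of `Matroid.nodeWidth`. -/
def bagUnion (T : SimpleGraph β) (τ : β → Set α) (t : β)
    (c : (T.induce {s | s ≠ t}).ConnectedComponent) : Set α :=
  τ t ∪ ⋃ (s : {s : β // s ≠ t}) (_ : (T.induce {s : β | s ≠ t}).connectedComponentMk s ≠ c),
    τ s.1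

lemma IsAcyclic.subset_bagUnion_union (hT : T.IsAcyclic) (τ : β → Set α) {t t' : β}
    (hadj : T.Adj t t') (u : β) :
    τ u ⊆ T.bagUnion τ t ((T.induce {s | s ≠ t}).connectedComponentMk ⟨t', hadj.ne.symm⟩) ∪
      T.bagUnion τ t' ((T.induce {s | s ≠ t'}).connectedComponentMk ⟨t, hadj.ne⟩) := by
  intro x hx
  obtain rfl | hut := eq_or_ne u t
  · exact Or.inl (Or.inl hx)
  obtain rfl | hut' := eq_or_ne u t'
  · exact Or.inr (Or.inl hx)
  by_cases hc : (T.induce {s | s ≠ t}).connectedComponentMk ⟨u, hut⟩ =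
      (T.induce {s | s ≠ t}).connectedComponentMk ⟨t', hadj.ne.symm⟩
  · refine Or.inr (Or.inr (mem_iUnion₂.2 ⟨⟨u, hut'⟩, fun hc' => ?_, hx⟩))
    exact hT.not_reachable_induce_of_reachable_induce hadj hut hut'
      (ConnectedComponent.exact hc) (ConnectedComponent.exact hc')
  · exact Or.inl (Or.inr (mem_iUnion₂.2 ⟨⟨u, hut⟩, hc, hx⟩))

end SimpleGraph

namespace Matroid

variable {α β : Type*} {M : Matroid α} {T : SimpleGraph β} {τ : β → Set α}

lemma nodeWidth_of_subsingleton [Subsingleton β] (M : Matroid α) (T : SimpleGraph β)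
    (τ : β → Set α) (t : β) : M.nodeWidth T τ t = M.mRk := by
  have : IsEmpty (T.induce {s | s ≠ t}).ConnectedComponent :=
    ⟨fun c => c.ind fun v => v.2 (Subsingleton.elim _ _)⟩
  simp only [nodeWidth, finsum_of_isEmpty, Nat.card_of_isEmpty]
  ring

lemma exists_mRank_bagUnion_lt [M.RankFinite] [Finite β] {t : β}
    (h : M.nodeWidth T τ t < M.mRk) : ∃ c, M.mRank (T.bagUnion τ t c) < M.mRk := by
  by_contra! hc
  have hfull (c) : M.mRank (T.bagUnion τ t c) = M.mRk := (M.mRank_le_mRk _).antisymm (hc c)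
  have := Fintype.ofFinite (T.induce {s | s ≠ t}).ConnectedComponent
  have hwidth : M.nodeWidth T τ t = M.mRk := by
    change (∑ᶠ c, (M.mRank (T.bagUnion τ t c) : ℤ)) - _ = _
    simp only [hfull, finsum_eq_sum_of_fintype, Finset.sum_const, Finset.card_univ,
      Nat.card_eq_fintype_card, nsmul_eq_mul]
    ring
  exact h.ne hwidth

theorem Round.exists_mRk_le_nodeWidth [M.RankFinite] [Finite β] (hM : M.Round)
    (hT : M.IsTreeDecomp T τ) : ∃ t, (M.mRk : ℤ) ≤ M.nodeWidth T τ t := by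
  by_contra! hsmall
  choose c hc using fun t => exists_mRank_bagUnion_lt (hsmall t)
  choose f hft hadj hfc using fun t =>
    hT.1.connected.preconnected.exists_adj_connectedComponentMk_eq (c t)
  obtain ⟨t, hfft⟩ := hT.1.exists_map_map_eq f hadj
  have hback : (T.induce {s | s ≠ f t}).connectedComponentMk ⟨f (f t), hft (f t)⟩ =
      (T.induce {s | s ≠ f t}).connectedComponentMk ⟨t, (hadj t).ne⟩ :=
    congrArg _ (Subtype.ext hfft)
  have hcov : M.E ⊆ T.bagUnion τ t (c t) ∪ T.bagUnion τ (f t) (c (f t)) := by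
    intro x hx
    obtain ⟨u, hu⟩ := hT.2 x hx
    rw [← hfc t, ← hfc (f t), hback]
    exact hT.1.isAcyclic.subset_bagUnion_union τ (hadj t) u hu
  obtain h | h := hM.mRk_le_mRank_or hcov
  · exact (hc t).not_ge h
  · exact (hc (f t)).not_ge h

end Matroid

open Matroid

/-- The tree-width of a round matroid equals its rank. -/
theorem treeWidth_of_round {α : Type*} (M : Matroid α) [M.Finite] (hround : M.Round) :
    M.treeWidth = M.mRk := by
  have hsingle : M.mRk ∈ {n : ℕ | ∃ (β : Type) (T : SimpleGraph β) (τ : β → Set α),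
      Finite β ∧ M.IsTreeDecomp T τ ∧ ∀ t, M.nodeWidth T τ t ≤ (n : ℤ)} :=
    ⟨Unit, ⊥, fun _ => M.E, inferInstance, ⟨.of_subsingleton, fun x hx => ⟨(), hx⟩⟩,
      fun t => (M.nodeWidth_of_subsingleton _ _ t).le⟩
  refine (Nat.sInf_le hsingle).antisymm (le_csInf ⟨_, hsingle⟩ ?_)
  rintro n ⟨β, T, τ, _, hT, hwidth⟩
  obtain ⟨t, ht⟩ := hround.exists_mRk_le_nodeWidth hT
  exact_mod_cast ht.trans (hwidth t)
end

section
/- Let C be a circuit in a supersolvable saturated matroid M with |C| ≥ 4. Then there exist distinct elements x, y ∈ C and an element z ∉ C such that {x,y,z} and (C−{x,y}) ∪ {z} are both circuits of M. In particular, every supersolvable saturated matroid is C-chordal. -/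
open Set

/-!
Let `F ⊂ F'` be the step of the modular chain (`r F' = r F + 1`) at which the circuit `C` is
first covered. At least two elements `x, y` of `C` lie outside `F`, and modularity of `F`
against the line `L = cl {x, y} ⊆ F'` produces a point `z` of `L` on `F`. No two of `x, y, z`
are parallel, so the line `L` is round, hence modular by saturation. Modularity of `L` against
`K = cl (C - {x, y})` gives `r (L ∩ K) = 2 + (|C| - 2) - (|C| - 1) = 1`, and a nonloop of
`L ∩ K` is the chord: the closures of two disjoint parts of the independent set `C - {f}` meet
only in loops, which makes both `{x, y, z}` and `(C - {x, y}) ∪ {z}` circuits.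
-/

namespace Matroid

variable {α : Type*} {M : Matroid α} {A C F F' I X Y : Set α} {e x y z : α}

section Rank

variable [M.RankFinite]

lemma natCast_mRank (X : Set α) : (M.mRank X : ℕ∞) = M.eRk X := by
  obtain ⟨I, hI⟩ := M.exists_isBasis' X
  have hIfin : I.Finite := hI.indep.finite
  have hsizes : {n : ℕ | ∃ J, M.Indep J ∧ J ⊆ X ∧ J.ncard = n} = Iic I.ncard := by
    ext n
    refine ⟨?_, fun hn ↦ ?_⟩
    · rintro ⟨J, hJ, hJX, rfl⟩
      have hle := hJ.encard_le_eRk_of_subset hJX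
      rw [← hI.encard_eq_eRk, ← hJ.finite.cast_ncard_eq, ← hIfin.cast_ncard_eq] at hle
      exact mem_Iic.2 (by exact_mod_cast hle)
    · obtain ⟨J, hJI, rfl⟩ := exists_subset_card_eq (mem_Iic.1 hn)
      exact ⟨J, hI.indep.subset hJI, hJI.trans hI.subset, rfl⟩
  rw [mRank, hsizes, csSup_Iic, ← hI.encard_eq_eRk, hIfin.cast_ncard_eq]

lemma mRank_mono (h : X ⊆ Y) : M.mRank X ≤ M.mRank Y := by
  have := M.eRk_mono h
  rwa [← natCast_mRank, ← natCast_mRank, Nat.cast_le] at this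

lemma mRank_closure (X : Set α) : M.mRank (M.closure X) = M.mRank X := by
  rw [← Nat.cast_inj (R := ℕ∞), natCast_mRank, natCast_mRank, eRk_closure_eq]

lemma Indep.mRank_eq (hI : M.Indep I) : M.mRank I = I.ncard := by
  rw [← Nat.cast_inj (R := ℕ∞), natCast_mRank, hI.eRk_eq_encard, hI.finite.cast_ncard_eq]

lemma IsCircuit.mRank_add_one_eq (hC : M.IsCircuit C) : M.mRank C + 1 = C.ncard := by
  rw [← Nat.cast_inj (R := ℕ∞), Nat.cast_add, natCast_mRank, hC.finite.cast_ncard_eq,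
    Nat.cast_one, hC.eRk_add_one_eq]

lemma exists_isNonloop_of_mRank_pos (h : 0 < M.mRank X) : ∃ e ∈ X, M.IsNonloop e := by
  have hne : M.eRk X ≠ 0 := by rw [← natCast_mRank]; exact_mod_cast h.ne'
  obtain ⟨e, ⟨heX, heE⟩, hloop⟩ := not_subset.1 (mt eRk_eq_zero_iff'.2 hne)
  exact ⟨e, heX, (isNonloop_iff_notMem_loops heE).2 hloop⟩

lemma IsFlat.mRank_lt_of_not_subset (hF : M.IsFlat F) (hFX : F ⊆ X) (hX : X ⊆ M.E)
    (hXF : ¬ X ⊆ F) : M.mRank F < M.mRank X := by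
  obtain ⟨e, heX, heF⟩ := not_subset.1 hXF
  have hins := M.eRk_insert_eq_add_one ⟨hX heX, by rwa [hF.closure]⟩
  have hle := M.eRk_mono (insert_subset heX hFX)
  rw [hins, ← natCast_mRank, ← natCast_mRank] at hle
  exact Nat.lt_of_succ_le (by exact_mod_cast hle)

end Rank

lemma circ_iff_isCircuit : M.Circ C ↔ M.IsCircuit C := by
  rw [isCircuit_iff_forall_ssubset, Dep, Circ]
  tauto

lemma IsModularFlat.exists_isNonloop_inter [M.RankFinite] (hF : M.IsModularFlat F)
    (hF' : M.IsFlat F') (h : M.mRank (F ∪ F') < M.mRank F + M.mRank F') :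
    ∃ e ∈ F ∩ F', M.IsNonloop e :=
  exists_isNonloop_of_mRank_pos (by have := hF.2 F' hF'; omega)

lemma roundSet_of_closure_pair_eq {L : Set α} (hx : x ∈ L) (hy : y ∈ L) (hz : z ∈ L)
    (hxy : M.closure {x, y} = L) (hxz : M.closure {x, z} = L) (hyz : M.closure {y, z} = L) :
    M.RoundSet L := by
  have hLE : L ⊆ M.E := hxy ▸ M.closure_subset_ground _
  have hspan : ∀ G, (M ↾ L).IsProperFlat G → ∀ a ∈ G, ∀ b ∈ G, M.closure {a, b} ≠ L := by
    rintro G ⟨hG, hGL⟩ a ha b hb hab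
    have hGL' : G ⊆ L := hG.subset_ground
    refine hGL (hGL'.antisymm ?_)
    calc L = M.closure {a, b} ∩ L := by rw [hab, inter_self]
      _ = (M ↾ L).closure {a, b} := (M.restrict_closure_eq (pair_subset (hGL' ha) (hGL' hb))).symm
      _ ⊆ (M ↾ L).closure G := (M ↾ L).closure_subset_closure (pair_subset ha hb)
      _ = G := hG.closure
  refine ⟨hLE, fun G₁ G₂ ⟨hG₁, hG₂, hcover⟩ ↦ ?_⟩
  have hcover' : ∀ a ∈ L, a ∈ G₁ ∨ a ∈ G₂ := fun a ha ↦ (hcover.symm ▸ ha : a ∈ G₁ ∪ G₂)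
  -- by pigeonhole, one flat of the cover contains two of `x, y, z` and hence spans `L`
  rcases hcover' x hx with h₁ | h₁ <;> rcases hcover' y hy with h₂ | h₂ <;>
    rcases hcover' z hz with h₃ | h₃ <;>
    first
    | exact hspan G₁ hG₁ x h₁ y h₂ hxy | exact hspan G₁ hG₁ x h₁ z h₃ hxz
    | exact hspan G₁ hG₁ y h₂ z h₃ hyz | exact hspan G₂ hG₂ x h₁ y h₂ hxy
    | exact hspan G₂ hG₂ x h₁ z h₃ hxz | exact hspan G₂ hG₂ y h₂ z h₃ hyz

lemma roundSet_closure_pair_of_isModularFlat [M.RankFinite] (hF : M.IsModularFlat F)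
    (hne : x ≠ y) (hxy : M.Indep {x, y}) (hx : x ∉ F) (hy : y ∉ F)
    (hr : M.mRank (F ∪ M.closure {x, y}) ≤ M.mRank F + 1) :
    M.RoundSet (M.closure {x, y}) := by
  have hrL : M.mRank (M.closure {x, y}) = 2 := by
    rw [mRank_closure, hxy.mRank_eq, ncard_pair hne]
  obtain ⟨z, ⟨hzF, hzL⟩, hz⟩ := hF.exists_isNonloop_inter (M.isFlat_closure {x, y}) (by omega)
  have hcl_sub : M.closure {z} ⊆ F := by
    simpa only [hF.1.closure] using M.closure_subset_closure (singleton_subset_iff.2 hzF)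
  have hzx : M.closure {z, x} = M.closure {x, y} := by
    rw [pair_comm x y]
    exact closure_insert_congr
      ⟨by rwa [pair_comm], fun h ↦ hx (hcl_sub (hz.mem_closure_singleton h))⟩
  have hzy : M.closure {z, y} = M.closure {x, y} :=
    closure_insert_congr ⟨hzL, fun h ↦ hy (hcl_sub (hz.mem_closure_singleton h))⟩
  have hxyE : {x, y} ⊆ M.E := hxy.subset_ground
  exact roundSet_of_closure_pair_eq (M.mem_closure_of_mem (by simp))
    (M.mem_closure_of_mem (by simp)) hzL rfl (by rw [pair_comm, hzx]) (by rw [pair_comm, hzy])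

lemma IsCircuit.closure_inter_closure_subset_loops (hC : M.IsCircuit C) (hAC : A ⊆ C)
    (heA : e ∈ A) : M.closure (A \ {e}) ∩ M.closure (C \ A) ⊆ M.loops := by
  have hind : M.Indep ((A \ {e}) ∪ (C \ A)) :=
    (hC.sdiff_singleton_indep (hAC heA)).subset
      (union_subset (sdiff_subset_sdiff_left hAC) (sdiff_subset_sdiff_right (by simpa)))
  rw [← hind.closure_inter_eq_inter_closure, (disjoint_sdiff_right.mono_left sdiff_subset).inter_eq,
    closure_empty]

lemma IsCircuit.insert_isCircuit_of_mem_closure_inter (hC : M.IsCircuit C) (hAC : A ⊆ C)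
    (hA : A.Nontrivial) (he : M.IsNonloop e) (heA : e ∈ M.closure A)
    (heB : e ∈ M.closure (C \ A)) : e ∉ A ∧ M.IsCircuit (insert e A) := by
  have hnot : ∀ f ∈ A, e ∉ M.closure (A \ {f}) := fun f hf hef ↦
    he.not_isLoop (hC.closure_inter_closure_subset_loops hAC hf ⟨hef, heB⟩)
  have hAind : M.Indep A := hC.ssubset_indep (hAC.ssubset_of_ne ?_)
  · have heA' : e ∉ A := fun h ↦ by
      obtain ⟨f, hf, hfe⟩ := hA.exists_ne e
      exact hnot f hf (M.mem_closure_of_mem' ⟨h, hfe.symm⟩ he.mem_ground)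
    exact ⟨heA', hAind.insert_isCircuit_of_forall heA' heA hnot⟩
  rintro rfl
  exact he.not_isLoop (by rwa [sdiff_self] at heB)

lemma IsCircuit.exists_chord_of_isModularFlat_closure_pair [M.RankFinite] (hC : M.IsCircuit C)
    (hx : x ∈ C) (hy : y ∈ C) (hne : x ≠ y) (hC4 : 4 ≤ C.ncard)
    (hmod : M.IsModularFlat (M.closure {x, y})) :
    ∃ z ∉ C, M.IsCircuit (insert z {x, y}) ∧ M.IsCircuit (insert z (C \ {x, y})) := by
  have hAC : {x, y} ⊆ C := pair_subset hx hy
  have hrC := hC.mRank_add_one_eq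
  have hBcard : (C \ {x, y}).ncard = C.ncard - 2 := by
    rw [ncard_sdiff hAC, ncard_pair hne]
  have hrA : M.mRank (M.closure {x, y}) = 2 := by
    rw [mRank_closure, (hC.ssubset_indep (hAC.ssubset_of_ne ?_)).mRank_eq, ncard_pair hne]
    rintro h
    rw [← h, ncard_pair hne] at hC4
    omega
  have hrB : M.mRank (M.closure (C \ {x, y})) = C.ncard - 2 := by
    rw [mRank_closure, (hC.ssubset_indep ?_).mRank_eq, hBcard]
    exact sdiff_ssubset_left_iff.2 ⟨x, hx, mem_insert x {y}⟩
  have hrAB : M.mRank (M.closure {x, y} ∪ M.closure (C \ {x, y})) ≤ M.mRank C := by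
    rw [← mRank_closure C]
    exact mRank_mono (union_subset (M.closure_subset_closure hAC)
      (M.closure_subset_closure sdiff_subset))
  obtain ⟨z, ⟨hzA, hzB⟩, hz⟩ :=
    hmod.exists_isNonloop_inter (M.isFlat_closure (C \ {x, y})) (by omega)
  have hB : (C \ {x, y}).Nontrivial := (one_lt_ncard_iff_nontrivial_and_finite.1 (by omega)).1
  obtain ⟨hzA', htri⟩ :=
    hC.insert_isCircuit_of_mem_closure_inter hAC (nontrivial_pair hne) hz hzA hzB
  obtain ⟨hzB', hbig⟩ := hC.insert_isCircuit_of_mem_closure_inter sdiff_subset hB hz hzB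
    (by rwa [sdiff_sdiff_cancel_left hAC])
  exact ⟨z, fun hzC ↦ hzB' ⟨hzC, hzA'⟩, htri, hbig⟩

lemma Supersolvable.exists_isModularFlat_step [M.RankFinite] (hss : M.Supersolvable)
    (hX : X ⊆ M.E) (hX0 : 0 < M.mRank X) :
    ∃ F F', M.IsModularFlat F ∧ M.IsFlat F' ∧ F ⊆ F' ∧ M.mRank F' = M.mRank F + 1 ∧
      X ⊆ F' ∧ ¬ X ⊆ F := by
  classical
  obtain ⟨F, hFmod, hFchain⟩ := hss
  have htop : F M.mRk = M.E := by
    have htop_flat := (hFmod _ le_rfl).1.1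
    by_contra hne
    have hlt := htop_flat.mRank_lt_of_not_subset htop_flat.subset_ground Subset.rfl
      fun h ↦ hne (htop_flat.subset_ground.antisymm h)
    exact hlt.ne (hFmod _ le_rfl).2
  have hex : ∃ i, X ⊆ F i := ⟨_, htop ▸ hX⟩
  have hle : Nat.find hex ≤ M.mRk := Nat.find_min' hex (htop ▸ hX)
  obtain ⟨j, hj⟩ : ∃ j, Nat.find hex = j + 1 := Nat.exists_eq_succ_of_ne_zero fun h0 ↦ by
    have := mRank_mono (M := M) (h0 ▸ Nat.find_spec hex)
    rw [(hFmod 0 (Nat.zero_le _)).2] at this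
    omega
  refine ⟨F j, F (j + 1), (hFmod j (by omega)).1, (hFmod (j + 1) (by omega)).1.1,
    hFchain j (by omega), by rw [(hFmod j (by omega)).2, (hFmod (j + 1) (by omega)).2],
    hj ▸ Nat.find_spec hex, Nat.find_min hex (by omega)⟩

lemma Supersolvable.exists_roundSet_closure_pair [M.RankFinite] (hss : M.Supersolvable)
    (hC : M.IsCircuit C) (hC3 : 3 ≤ C.ncard) :
    ∃ x ∈ C, ∃ y ∈ C, x ≠ y ∧ M.RoundSet (M.closure {x, y}) := by
  have hrC := hC.mRank_add_one_eq
  obtain ⟨F, F', hF, hF', hFF', hr, hCF', hCF⟩ :=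
    hss.exists_isModularFlat_step hC.subset_ground (by omega)
  obtain ⟨x, hx, hxF⟩ := not_subset.1 hCF
  obtain ⟨y, ⟨hy, hyx⟩, hyF⟩ : ∃ y ∈ C \ {x}, y ∉ F := by
    by_contra! h
    refine hxF (hF.1.closure ▸ M.closure_subset_closure h ?_)
    exact hC.mem_closure_sdiff_singleton_of_mem hx
  have hne : x ≠ y := Ne.symm hyx
  have hxy : M.Indep {x, y} := hC.ssubset_indep ((pair_subset hx hy).ssubset_of_ne ?_)
  · refine ⟨x, hx, y, hy, hne, roundSet_closure_pair_of_isModularFlat hF hne hxy hxF hyF ?_⟩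
    rw [← hr]
    refine mRank_mono (union_subset hFF' ?_)
    exact hF'.closure ▸ M.closure_subset_closure (pair_subset (hCF' hx) (hCF' hy))
  rintro h
  rw [← h, ncard_pair hne] at hC3
  omega

end Matroid

open Matroid

/-- Every circuit of size at least four in a supersolvable saturated matroid has a pair of
distinct elements `x, y` and an element `z ∉ C` with `{x, y, z}` and `(C − {x, y}) ∪ {z}`
both circuits; in particular, every supersolvable saturated matroid is C-chordal. -/
theorem supersolvable_saturated_circuit_chord {α : Type*} (M : Matroid α) [M.Finite]
    (hss : M.Supersolvable) (hsat : M.Saturated)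
    (C : Set α) (hC : M.Circ C) (hcard : 4 ≤ C.ncard) :
    (∃ x ∈ C, ∃ y ∈ C, x ≠ y ∧ ∃ z ∉ C,
      M.Circ {x, y, z} ∧ M.Circ (insert z (C \ {x, y}))) ∧
    (∃ z ∉ C, ∃ A B : Set α, A ∪ B = C ∧ Disjoint A B ∧
      M.Circ (insert z A) ∧ M.Circ (insert z B)) := by
  simp only [circ_iff_isCircuit] at hC ⊢
  obtain ⟨x, hx, y, hy, hne, hround⟩ := hss.exists_roundSet_closure_pair hC (by omega)
  obtain ⟨z, hzC, htri, hbig⟩ := hC.exists_chord_of_isModularFlat_closure_pair hx hy hne hcard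
    (hsat _ (M.isFlat_closure _) hround)
  have htri' : M.IsCircuit {x, y, z} := by rwa [pair_comm y z, insert_comm x z]
  exact ⟨⟨x, hx, y, hy, hne, z, hzC, htri', hbig⟩,
    z, hzC, {x, y}, C \ {x, y}, union_sdiff_cancel (pair_subset hx hy), disjoint_sdiff_right,
    htri, hbig⟩
end
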